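/- Let Q_1, …, Q_m be positive definite real n×n matrices, let α₀ > 0, and let A_1, …, A_N be real n×n matrices such that A_i Q_j + Q_j A_iᵀ + 2α₀ Q_j is negative semidefinite for every i and every j. Let A : ℝ → Matrix (Fin n) (Fin n) ℝ with A(t) in the convex hull of {A_1, …, A_N} for every t, and let x : ℝ → (Fin n → ℝ) be differentiable with x'(t) = A(t) x(t). Then ‖x(t)‖_c ≤ e^{−α₀ t} ‖x(0)‖_c for all t ≥ 0; in particular, if ‖x(0)‖_c ≤ 1 then ‖x(t)‖_c ≤ 1 for all t ≥ 0, so the composite unit ball Ω_c = {x : ‖x‖_c ≤ 1} is forward invariant for the polytopic linear differential inclusion. -/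

import Mathlib

/-!
For a fixed weight `γ` in the simplex, `Q_γ = ∑ γ_j Q_j` is positive definite and satisfies the
Lyapunov inequality `A Q_γ + Q_γ Aᵀ + 2α₀ Q_γ ⪯ 0` for every `A` in the convex hull of the vertices,
because the inequality is linear in `Q` and affine in `A`. Writing `y = Q_γ⁻¹ x`, the derivative of
`V_γ(x) = xᵀ Q_γ⁻¹ x` along `ẋ = A x` is `2 yᵀ A x = yᵀ (A Q_γ + Q_γ Aᵀ) y ≤ -2α₀ V_γ(x)`, so by
Grönwall `V_γ(x(t)) ≤ e^{-2α₀ t} V_γ(x(0))`. The composite function `V_c` is the infimum of the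
`V_γ`, and this bound passes to the infimum; taking square roots gives the claim.
-/

open Matrix

/-- The composite quadratic Lyapunov function
`V_c(x) = inf_{γ ∈ Δ} xᵀ (∑ j γ_j Q_j)⁻¹ x`, where `Δ` is the standard simplex. -/
noncomputable def compQuad {m n : ℕ} (Q : Fin m → Matrix (Fin n) (Fin n) ℝ)
    (x : Fin n → ℝ) : ℝ :=
  sInf ((fun γ : Fin m → ℝ => x ⬝ᵥ ((∑ j, γ j • Q j)⁻¹).mulVec x) '' stdSimplex ℝ (Fin m))

/-- The composite vector norm `‖x‖_c = √(V_c(x))`. -/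
noncomputable def compNorm {m n : ℕ} (Q : Fin m → Matrix (Fin n) (Fin n) ℝ)
    (x : Fin n → ℝ) : ℝ :=
  Real.sqrt (compQuad Q x)

section Derivatives

variable {𝕜 ι : Type*} [NontriviallyNormedField 𝕜] [Fintype ι]

theorem HasDerivAt.dotProduct {f g : 𝕜 → ι → 𝕜} {f' g' : ι → 𝕜} {t : 𝕜}
    (hf : HasDerivAt f f' t) (hg : HasDerivAt g g' t) :
    HasDerivAt (fun s => f s ⬝ᵥ g s) (f' ⬝ᵥ g t + f t ⬝ᵥ g') t := by
  simp only [_root_.dotProduct, ← Finset.sum_add_distrib]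
  exact HasDerivAt.fun_sum fun i _ => (hasDerivAt_pi.1 hf i).mul (hasDerivAt_pi.1 hg i)

theorem HasDerivAt.mulVec {κ : Type*} (M : Matrix κ ι 𝕜) {f : 𝕜 → ι → 𝕜} {f' : ι → 𝕜} {t : 𝕜}
    (hf : HasDerivAt f f' t) : HasDerivAt (fun s => M *ᵥ f s) (M *ᵥ f') t :=
  hasDerivAt_pi.2 fun i =>
    ((hasDerivAt_const t (M i)).dotProduct hf).congr_deriv (by rw [zero_dotProduct, zero_add]; rfl)

end Derivatives

theorem hasDerivAt_dotProduct_mulVec_self {ι : Type*} [Fintype ι] {P : Matrix ι ι ℝ}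
    (hP : P.IsSymm) {x : ℝ → ι → ℝ} {v : ι → ℝ} {t : ℝ} (hx : HasDerivAt x v t) :
    HasDerivAt (fun s => x s ⬝ᵥ P *ᵥ x s) (2 * (P *ᵥ x t ⬝ᵥ v)) t := by
  refine (hx.dotProduct (hx.mulVec P)).congr_deriv ?_
  rw [dotProduct_comm v, dotProduct_mulVec (x t), ← mulVec_transpose, hP.eq]
  ring

theorem le_exp_mul_of_hasDerivAt_le_mul {f f' : ℝ → ℝ} {c : ℝ} (hf : ∀ t, HasDerivAt f (f' t) t)
    (bound : ∀ t, 0 ≤ t → f' t ≤ c * f t) {t : ℝ} (ht : 0 ≤ t) :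
    f t ≤ Real.exp (c * t) * f 0 := by
  have := le_gronwallBound_of_liminf_deriv_right_le (δ := f 0) (ε := 0) (b := t)
    (fun s _ => (hf s).continuousAt.continuousWithinAt)
    (fun s _ r hr => (hf s).hasDerivWithinAt.liminf_right_slope_le hr) le_rfl
    (fun s hs => by simpa using bound s hs.1) t ⟨ht, le_rfl⟩
  rwa [gronwallBound_ε0, sub_zero, mul_comm] at this

theorem sInf_image_le_mul_sInf_image {α : Type*} {s : Set α} {f g : α → ℝ} {c : ℝ} (hc : 0 ≤ c)
    (hf : ∀ a ∈ s, 0 ≤ f a) (hfg : ∀ a ∈ s, f a ≤ c * g a) :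
    sInf (f '' s) ≤ c * sInf (g '' s) := by
  rw [sInf_image', sInf_image', Real.mul_iInf_of_nonneg hc]
  exact ciInf_mono ⟨0, by rintro _ ⟨a, rfl⟩; exact hf a a.2⟩ fun a => hfg a a.2

section Lyapunov

variable {n κ : Type*} [Fintype κ]

theorem posDef_sum_smul_of_mem_stdSimplex {Q : κ → Matrix n n ℝ} (hQ : ∀ j, (Q j).PosDef)
    {γ : κ → ℝ} (hγ : γ ∈ stdSimplex ℝ κ) : (∑ j, γ j • Q j).PosDef := by
  classical
  obtain ⟨j₀, hj₀⟩ : ∃ j, 0 < γ j := by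
    by_contra! h
    have hsum := hγ.2
    rw [Finset.sum_eq_zero fun j _ => le_antisymm (h j) (hγ.1 j)] at hsum
    exact zero_ne_one hsum
  rw [← Finset.add_sum_erase _ _ (Finset.mem_univ j₀)]
  exact ((hQ j₀).smul hj₀).add_posSemidef
    (posSemidef_sum _ fun j _ => (hQ j).posSemidef.smul (hγ.1 j))

variable [Fintype n]

theorem posSemidef_neg_lyapunov_sum_smul {α : ℝ} {B : Matrix n n ℝ} {Q : κ → Matrix n n ℝ}
    {γ : κ → ℝ} (hγ : ∀ j, 0 ≤ γ j)
    (hQ : ∀ j, (-(B * Q j + Q j * Bᵀ + (2 * α) • Q j)).PosSemidef) :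
    (-(B * ∑ j, γ j • Q j + (∑ j, γ j • Q j) * Bᵀ + (2 * α) • ∑ j, γ j • Q j)).PosSemidef := by
  have hsum : -(B * ∑ j, γ j • Q j + (∑ j, γ j • Q j) * Bᵀ + (2 * α) • ∑ j, γ j • Q j)
      = ∑ j, γ j • -(B * Q j + Q j * Bᵀ + (2 * α) • Q j) := by
    simp only [Finset.mul_sum, Finset.sum_mul, Finset.smul_sum, ← Finset.sum_add_distrib,
      ← Finset.sum_neg_distrib, mul_smul_comm, smul_mul_assoc, smul_neg, smul_add,
      smul_comm (2 * α)]
  rw [hsum]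
  exact posSemidef_sum _ fun j _ => (hQ j).smul (hγ j)

theorem convex_setOf_posSemidef_neg_lyapunov (α : ℝ) (P : Matrix n n ℝ) :
    Convex ℝ {B : Matrix n n ℝ | (-(B * P + P * Bᵀ + (2 * α) • P)).PosSemidef} := by
  intro B₁ h₁ B₂ h₂ a b ha hb hab
  have hcomb : -((a • B₁ + b • B₂) * P + P * (a • B₁ + b • B₂)ᵀ + (2 * α) • P)
      = a • -(B₁ * P + P * B₁ᵀ + (2 * α) • P) + b • -(B₂ * P + P * B₂ᵀ + (2 * α) • P) := by
    simp only [transpose_add, transpose_smul, add_mul, mul_add, smul_mul_assoc, mul_smul_comm]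
    linear_combination (norm := module) hab • ((2 * α) • P)
  rw [Set.mem_ofPred_eq, hcomb]
  exact (h₁.smul ha).add (h₂.smul hb)

theorem posSemidef_neg_lyapunov_of_mem_convexHull {ι : Type*} {α : ℝ}
    {As : ι → Matrix n n ℝ} {Q : κ → Matrix n n ℝ}
    (hLMI : ∀ i j, (-(As i * Q j + Q j * (As i)ᵀ + (2 * α) • Q j)).PosSemidef)
    {γ : κ → ℝ} (hγ : ∀ j, 0 ≤ γ j) {B : Matrix n n ℝ} (hB : B ∈ convexHull ℝ (Set.range As)) :
    (-(B * ∑ j, γ j • Q j + (∑ j, γ j • Q j) * Bᵀ + (2 * α) • ∑ j, γ j • Q j)).PosSemidef :=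
  convexHull_min (Set.range_subset_iff.2 fun i => posSemidef_neg_lyapunov_sum_smul hγ (hLMI i))
    (convex_setOf_posSemidef_neg_lyapunov α _) hB

variable [DecidableEq n]

theorem inv_mulVec_dotProduct_mulVec_le {α : ℝ} {Q B : Matrix n n ℝ} (hQ : Q.PosDef)
    (hB : (-(B * Q + Q * Bᵀ + (2 * α) • Q)).PosSemidef) (x : n → ℝ) :
    Q⁻¹ *ᵥ x ⬝ᵥ B *ᵥ x ≤ -α * (x ⬝ᵥ Q⁻¹ *ᵥ x) := by
  set y := Q⁻¹ *ᵥ x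
  have hy : Q *ᵥ y = x := by
    rw [mulVec_mulVec, mul_nonsing_inv _ ((isUnit_iff_isUnit_det _).1 hQ.isUnit), one_mulVec]
  have hQBy : y ⬝ᵥ (Q * Bᵀ) *ᵥ y = y ⬝ᵥ B *ᵥ x := by
    rw [← mulVec_mulVec, dotProduct_mulVec, ← mulVec_transpose,
      (isHermitian_iff_isSymm.1 hQ.isHermitian).eq, hy,
      dotProduct_mulVec, vecMul_transpose, dotProduct_comm]
  have hquad := hB.dotProduct_mulVec_nonneg y
  simp only [star_trivial, neg_mulVec, add_mulVec, smul_mulVec, ← mulVec_mulVec (M := B), hy,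
    dotProduct_neg, dotProduct_add, dotProduct_smul, hQBy, smul_eq_mul] at hquad
  rw [dotProduct_comm x]
  linarith

theorem dotProduct_inv_mulVec_le_exp_mul {α : ℝ} {Q : Matrix n n ℝ} (hQ : Q.PosDef)
    {A : ℝ → Matrix n n ℝ} (hA : ∀ t, (-(A t * Q + Q * (A t)ᵀ + (2 * α) • Q)).PosSemidef)
    {x : ℝ → n → ℝ} (hx : ∀ t, HasDerivAt x (A t *ᵥ x t) t) {t : ℝ} (ht : 0 ≤ t) :
    x t ⬝ᵥ Q⁻¹ *ᵥ x t ≤ Real.exp (-(2 * α) * t) * (x 0 ⬝ᵥ Q⁻¹ *ᵥ x 0) :=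
  le_exp_mul_of_hasDerivAt_le_mul
    (fun t => hasDerivAt_dotProduct_mulVec_self
      (isHermitian_iff_isSymm.1 hQ.inv.isHermitian) (hx t))
    (fun t _ => by linarith [inv_mulVec_dotProduct_mulVec_le hQ (hA t) (x t)]) ht

end Lyapunov

theorem compQuad_le_exp_mul {m n N : ℕ} {Q : Fin m → Matrix (Fin n) (Fin n) ℝ}
    (hQ : ∀ j, (Q j).PosDef) {α : ℝ} {As : Fin N → Matrix (Fin n) (Fin n) ℝ}
    (hLMI : ∀ i j, (-(As i * Q j + Q j * (As i)ᵀ + (2 * α) • Q j)).PosSemidef)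
    {A : ℝ → Matrix (Fin n) (Fin n) ℝ} (hA : ∀ t, A t ∈ convexHull ℝ (Set.range As))
    {x : ℝ → Fin n → ℝ} (hx : ∀ t, HasDerivAt x (A t *ᵥ x t) t) {t : ℝ} (ht : 0 ≤ t) :
    compQuad Q (x t) ≤ Real.exp (-(2 * α) * t) * compQuad Q (x 0) := by
  refine sInf_image_le_mul_sInf_image (Real.exp_pos _).le (fun γ hγ => ?_) fun γ hγ => ?_
  · exact (posDef_sum_smul_of_mem_stdSimplex hQ hγ).inv.posSemidef.dotProduct_mulVec_nonneg _
  · exact dotProduct_inv_mulVec_le_exp_mul (posDef_sum_smul_of_mem_stdSimplex hQ hγ)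
      (fun s => posSemidef_neg_lyapunov_of_mem_convexHull hLMI hγ.1 (hA s)) hx ht

theorem pldi_comp_invariance_general (m n N : ℕ)
    (Q : Fin m → Matrix (Fin n) (Fin n) ℝ) (hQ : ∀ j, (Q j).PosDef)
    (α₀ : ℝ) (hα₀ : 0 < α₀)
    (As : Fin N → Matrix (Fin n) (Fin n) ℝ)
    (hLMI : ∀ (i : Fin N) (j : Fin m),
      (-(As i * Q j + Q j * (As i)ᵀ + (2 * α₀) • Q j)).PosSemidef)
    (A : ℝ → Matrix (Fin n) (Fin n) ℝ)
    (hA : ∀ t : ℝ, A t ∈ convexHull ℝ (Set.range As))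
    (x : ℝ → (Fin n → ℝ))
    (hx : ∀ t : ℝ, HasDerivAt x ((A t).mulVec (x t)) t) :
    (∀ t : ℝ, 0 ≤ t → compNorm Q (x t) ≤ Real.exp (-α₀ * t) * compNorm Q (x 0)) ∧
    (compNorm Q (x 0) ≤ 1 → ∀ t : ℝ, 0 ≤ t → compNorm Q (x t) ≤ 1) := by
  have hdecay : ∀ t : ℝ, 0 ≤ t → compNorm Q (x t) ≤ Real.exp (-α₀ * t) * compNorm Q (x 0) := by
    intro t ht
    have hsqrt : Real.sqrt (Real.exp (-(2 * α₀) * t)) = Real.exp (-α₀ * t) := by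
      rw [show -(2 * α₀) * t = -α₀ * t + -α₀ * t by ring, Real.exp_add,
        Real.sqrt_mul_self (Real.exp_pos _).le]
    calc compNorm Q (x t)
        ≤ Real.sqrt (Real.exp (-(2 * α₀) * t) * compQuad Q (x 0)) :=
          Real.sqrt_le_sqrt (compQuad_le_exp_mul hQ hLMI hA hx ht)
      _ = Real.exp (-α₀ * t) * compNorm Q (x 0) := by
          rw [Real.sqrt_mul (Real.exp_pos _).le, hsqrt, compNorm]
  refine ⟨hdecay, fun h₀ t ht => (hdecay t ht).trans ?_⟩
  exact mul_le_one₀ (Real.exp_le_one_iff.2 (by nlinarith)) (Real.sqrt_nonneg _) h₀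

/-- if all vertex matrices of a polytopic linear differential inclusion satisfy
`A_i Q_j + Q_j A_iᵀ + 2α₀ Q_j ⪯ 0` for all `j`, then along any trajectory `x' = A(t) x` with
`A(t) ∈ Co{A_1, …, A_N}` we have `‖x(t)‖_c ≤ e^{-α₀ t} ‖x(0)‖_c`; in particular the
composite unit ball is forward invariant. -/
theorem pldi_comp_invariance (m n N : ℕ) (hm : 0 < m) (hN : 0 < N)
    (Q : Fin m → Matrix (Fin n) (Fin n) ℝ) (hQ : ∀ j, (Q j).PosDef)
    (α₀ : ℝ) (hα₀ : 0 < α₀)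
    (As : Fin N → Matrix (Fin n) (Fin n) ℝ)
    (hLMI : ∀ (i : Fin N) (j : Fin m),
      (-(As i * Q j + Q j * (As i)ᵀ + (2 * α₀) • Q j)).PosSemidef)
    (A : ℝ → Matrix (Fin n) (Fin n) ℝ)
    (hA : ∀ t : ℝ, A t ∈ convexHull ℝ (Set.range As))
    (x : ℝ → (Fin n → ℝ))
    (hx : ∀ t : ℝ, HasDerivAt x ((A t).mulVec (x t)) t) :
    (∀ t : ℝ, 0 ≤ t → compNorm Q (x t) ≤ Real.exp (-α₀ * t) * compNorm Q (x 0)) ∧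
    (compNorm Q (x 0) ≤ 1 → ∀ t : ℝ, 0 ≤ t → compNorm Q (x t) ≤ 1) :=
  pldi_comp_invariance_general m n N Q hQ α₀ hα₀ As hLMI A hA x hx
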